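/- A free profinite group of finite rank m is almost ω-free if and only if m > 1. -/

import Mathlib

open AlgebraicGeometry CategoryTheory CategoryTheory.Limits

universe u v

noncomputable section


/-- A profinite group `Π` is almost ω-free if every finite embedding problem
`(α : Π ↠ G, f : Γ ↠ G)` for `Π` has a proper solution after restriction to some open
subgroup `H ≤ Π` on which `α` remains surjective.  (Finite groups carry the discrete
topology.) -/
def IsAlmostOmegaFree (P : Type v) [Group P] [TopologicalSpace P] : Prop :=
  ∀ (G Γ : Type) [Group G] [Group Γ] [Finite G] [Finite Γ] (α : P →* G) (f : Γ →* G),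
    (@Continuous P G _ ⊥ α) → Function.Surjective α → Function.Surjective f →
    ∃ H : Subgroup P, IsOpen (H : Set P) ∧
      Function.Surjective (α.comp H.subtype) ∧
      ∃ γ : H →* Γ, (@Continuous H Γ _ ⊥ γ) ∧ Function.Surjective γ ∧
        f.comp γ = α.comp H.subtype

/-- A profinite group `Π` is ω-free if every finite embedding problem for `Π` has a
proper solution. -/
def IsOmegaFree (P : Type v) [Group P] [TopologicalSpace P] : Prop :=
  ∀ (G Γ : Type) [Group G] [Group Γ] [Finite G] [Finite Γ] (α : P →* G) (f : Γ →* G),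
    (@Continuous P G _ ⊥ α) → Function.Surjective α → Function.Surjective f →
    ∃ γ : P →* Γ, (@Continuous P Γ _ ⊥ γ) ∧ Function.Surjective γ ∧ f.comp γ = α

/-- `Π` is a free profinite group of rank `m`, i.e. the profinite completion of the free
group on `m` generators: it is a profinite group containing `m` distinguished elements
such that every map from these to a finite group extends uniquely to a continuous
homomorphism. -/
def IsFreeProfiniteOfRank (m : ℕ) (P : Type v) [Group P] [TopologicalSpace P] : Prop :=
  IsTopologicalGroup P ∧ CompactSpace P ∧ T2Space P ∧ TotallyDisconnectedSpace P ∧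
  ∃ ι : Fin m → P, ∀ (G : Type) [Group G] [Finite G] (g : Fin m → G),
    ∃! φ : {f : P →* G // @Continuous P G _ ⊥ f}, ∀ i, (φ : P →* G) (ι i) = g i

/-!
If `m ≤ 1`, every continuous finite quotient of `Π` is generated by the image of at most one
generator, so it is cyclic; then so is every continuous finite quotient of an open subgroup, and the
embedding problem `S₃ → 1` has no proper solution on any open subgroup.

If `m ≥ 2`, put `y = ι 1`, `x = ι 0`, `n = |G| |Γ| + 1` and let `ψ : Π → ℤ/n` send `y` to `1` and
the other generators to `0`. The Kaloujnine–Krasner embedding `Π → G ≀ ℤ/n` attached to `α`, `ψ` and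
the transversal `d ↦ y ^ d` lifts through `f` to a continuous `ρ : Π → Γ ≀ ℤ/n`, prescribed on the
generators; on `H = ker ψ` the coordinate of `ρ` at `0` solves the embedding problem. As
`n ≡ 1 [MOD |G|]`, `α` stays onto on `H`. The coordinates of `ρ x` at the positions `|G| i` can be
chosen to run through the fibre of `f` over `α x`, and they are the values of the solution at the
conjugates of `x` by powers of `y`; so its image contains `ker f`, and is all of `Γ`.
-/

open Topology

section DiscreteCodomain

variable {P : Type*} [TopologicalSpace P]

theorem isOpen_preimage_of_continuous_bot {M : Type*} {φ : P → M} (hφ : Continuous[_, ⊥] φ)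
    (s : Set M) : IsOpen (φ ⁻¹' s) := by
  let _ : TopologicalSpace M := ⊥
  have := discreteTopology_bot M
  exact hφ.isOpen_preimage s (isOpen_discrete s)

theorem Continuous.bot_comp {Y Z : Type*} {g : P → Y} (hg : Continuous[_, ⊥] g) (h : Y → Z) :
    Continuous[_, ⊥] (h ∘ g) :=
  @Continuous.comp P Y Z _ ⊥ ⊥ g h continuous_bot hg

theorem MonoidHom.continuous_bot_of_isOpen_ker [Group P] [IsTopologicalGroup P] {M : Type*}
    [Group M] (φ : P →* M) (h : IsOpen (φ.ker : Set P)) : Continuous[_, ⊥] φ := by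
  let _ : TopologicalSpace M := ⊥
  have := discreteTopology_bot M
  refine continuous_of_continuousAt_one φ ?_
  rw [ContinuousAt, map_one, nhds_discrete M, Filter.tendsto_pure]
  exact h.mem_nhds φ.ker.one_mem

end DiscreteCodomain

/-- Conjugating the action of `Q` on `Q ⊕ Q` by the involution that swaps the two copies of `K`
leaves the action of `K` unchanged but not that of `x`. -/
theorem Subgroup.exists_monoidHom_eqOn_ne {Q : Type*} [Group Q] {K : Subgroup Q} {x : Q}
    (hx : x ∉ K) : ∃ ψ₁ ψ₂ : Q →* Equiv.Perm (Q ⊕ Q), (∀ k ∈ K, ψ₁ k = ψ₂ k) ∧ ψ₁ x ≠ ψ₂ x := by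
  classical
  let σ : Q ⊕ Q → Q ⊕ Q :=
    Sum.elim (fun q => if q ∈ K then .inr q else .inl q) (fun q => if q ∈ K then .inl q else .inr q)
  have hσ : Function.Involutive σ := by
    rintro (q | q) <;> by_cases hq : q ∈ K <;> simp [σ, hq]
  let θ := hσ.toPerm
  let ψ₁ := MulAction.toPermHom Q (Q ⊕ Q)
  refine ⟨ψ₁, (MulAut.conj θ).toMonoidHom.comp ψ₁, fun k hk => ?_, fun h => ?_⟩
  · ext z
    have hθ : θ (k • θ z) = k • z := by
      rcases z with q | q <;> by_cases hq : q ∈ K <;>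
        simp [θ, σ, hq, Subgroup.mul_mem_cancel_left K hk]
    simp only [ψ₁, MonoidHom.comp_apply, MulEquiv.coe_toMonoidHom, MulAut.conj_apply,
      Equiv.Perm.mul_apply, Equiv.Perm.inv_def, MulAction.toPermHom_apply, MulAction.toPerm_apply]
    rw [show θ.symm = θ from hσ.toPerm_symm, hθ]
  · have := congr($h (.inl 1))
    simp [ψ₁, θ, σ, hx, hσ.toPerm_symm] at this

theorem MonoidHom.isCyclic_of_ker_le {H C Γ : Type*} [Group H] [Group C] [Group Γ] (j : H →* C)
    [IsCyclic j.range] {γ : H →* Γ} (hγ : Function.Surjective γ) (hle : j.ker ≤ γ.ker) :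
    IsCyclic Γ :=
  isCyclic_of_surjective
    ((QuotientGroup.lift j.ker γ hle).comp (QuotientGroup.quotientKerEquivRange j).symm.toMonoidHom)
    fun g => by
      obtain ⟨h, rfl⟩ := hγ g
      exact ⟨QuotientGroup.quotientKerEquivRange j h, by simp⟩

theorem MonoidHom.surjective_of_fiber_subset_range {H Γ G : Type*} [Group H] [Group Γ] [Group G]
    {f : Γ →* G} {γ : H →* Γ} (hfγ : Function.Surjective (f.comp γ)) {g : G}
    (hfib : ∀ z, f z = g → z ∈ γ.range) : Function.Surjective γ := by
  intro x
  obtain ⟨h, hh⟩ := hfγ (f x)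
  obtain ⟨h₀, hh₀⟩ := hfγ g
  simp only [MonoidHom.comp_apply] at hh hh₀
  have hmem : x * (γ h)⁻¹ * γ h₀ ∈ γ.range := hfib _ (by simp [hh, hh₀])
  have := γ.range.mul_mem (γ.range.mul_mem hmem (γ.range.inv_mem ⟨h₀, rfl⟩)) ⟨h, rfl⟩
  simpa using this

theorem Function.Surjective.exists_lift_eq_on_fiber {D Γ G : Type*} {f : Γ → G}
    (hf : Function.Surjective f) (u : D → G) {e : Γ → D} (he : Function.Injective e) {g : G}
    (hu : ∀ z, u (e z) = g) : ∃ w : D → Γ, (∀ d, f (w d) = u d) ∧ ∀ z, f z = g → w (e z) = z := by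
  classical
  refine ⟨fun d => if h : ∃ z, e z = d ∧ f z = u d then h.choose else Function.surjInv hf (u d),
    fun d => ?_, fun z hz => ?_⟩
  · dsimp only
    split_ifs with h
    exacts [h.choose_spec.2, Function.surjInv_eq hf _]
  · have h : ∃ z', e z' = e z ∧ f z' = u (e z) := ⟨z, rfl, hz.trans (hu z).symm⟩
    simp only [dif_pos h]
    exact he h.choose_spec.1

theorem MonoidHom.surjective_comp_ker_subtype_of_pow_eq_one {P G : Type*} [Group P] [Group G]
    {n : ℕ} [NeZero n] {α : P →* G} (hα : Function.Surjective α)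
    {ψ : P →* Multiplicative (ZMod n)} {y : P}
    (hψy : ψ y = .ofAdd 1) (hαy : α y ^ (n - 1) = 1) :
    Function.Surjective (α.comp ψ.ker.subtype) := by
  intro g
  obtain ⟨p, rfl⟩ := hα g
  refine ⟨⟨p * y ^ ((n - 1) * (ψ p).toAdd.val), ?_⟩, by simp [pow_mul, hαy]⟩
  rw [MonoidHom.mem_ker, map_mul, map_pow, hψy]
  apply Multiplicative.toAdd.injective
  simp [Nat.cast_sub (NeZero.one_le : 1 ≤ n)]

theorem ZMod.val_sub_one_add_one {n : ℕ} [Fact (1 < n)] {d : ZMod n} (hd : d ≠ 0) :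
    (d - 1).val + 1 = d.val := by
  have hpos : 0 < d.val := Nat.pos_of_ne_zero ((ZMod.val_ne_zero d).mpr hd)
  rw [ZMod.val_sub (by rwa [ZMod.val_one]), ZMod.val_one]
  omega

namespace RegularWreathProduct

variable {D Q : Type*} [Group D] [Group Q]

def mapLeft {D' : Type*} [Group D'] (f : D →* D') : D ≀ᵣ Q →* D' ≀ᵣ Q where
  toFun x := ⟨f ∘ x.left, x.right⟩
  map_one' := by ext <;> simp [one_left, one_right]
  map_mul' x y := by ext <;> simp [mul_left, mul_right]

@[simp] theorem mapLeft_left {D' : Type*} [Group D'] (f : D →* D') (x : D ≀ᵣ Q) (q : Q) :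
    (mapLeft f x).left q = f (x.left q) := rfl

@[simp] theorem mapLeft_right {D' : Type*} [Group D'] (f : D →* D') (x : D ≀ᵣ Q) :
    (mapLeft f x).right = x.right := rfl

def kerEval (q : Q) : (rightHom : D ≀ᵣ Q →* Q).ker →* D where
  toFun x := x.1.left q
  map_one' := rfl
  map_mul' x y := by
    have hx : x.1.right = 1 := x.2
    simp [mul_left, hx]

theorem inv_mul_mul_left_one (A B : D ≀ᵣ Q) (hB : B.right = 1) :
    (A⁻¹ * B * A).left 1 = (A.left A.right)⁻¹ * B.left A.right * A.left A.right := by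
  simp [mul_left, inv_left, inv_right, mul_right, hB]

theorem pow_left_apply_pow_eq_one [DecidableEq Q] (c : D) (t : Q) {j : ℕ} (hj : j < orderOf t) :
    ((⟨Pi.mulSingle 1 c, t⟩ : D ≀ᵣ Q) ^ j).left (t ^ j) = 1 := by
  induction j with
  | zero => rfl
  | succ j ih =>
    rw [pow_succ', mul_left, Pi.mul_apply]
    dsimp only
    rw [Pi.mulSingle_eq_of_ne (pow_ne_one_of_lt_orderOf j.succ_ne_zero hj), pow_succ',
      inv_mul_cancel_left, ih (by omega), one_mul]

theorem conj_pow_left_one [DecidableEq Q] (c : D) (t : Q) {B : D ≀ᵣ Q} (hB : B.right = 1)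
    {j : ℕ} (hj : j < orderOf t) :
    (((⟨Pi.mulSingle 1 c, t⟩ : D ≀ᵣ Q) ^ j)⁻¹ * B * ⟨Pi.mulSingle 1 c, t⟩ ^ j).left 1 =
      B.left (t ^ j) := by
  have hr : ((⟨Pi.mulSingle 1 c, t⟩ : D ≀ᵣ Q) ^ j).right = t ^ j := map_pow rightHom _ j
  rw [inv_mul_mul_left_one _ _ hB, hr, pow_left_apply_pow_eq_one c t hj, inv_one, one_mul, mul_one]

variable {P G : Type*} [Group P] [Group G]

/-- Meant for a transversal `s` of `ker ψ`, but a homomorphism for any `s`; when `s 1 = 1`, the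
coordinate at `1` of the image of `h ∈ ker ψ` is `α h`. -/
def kaloujnineKrasner (α : P →* G) (ψ : P →* Q) (s : Q → P) : P →* G ≀ᵣ Q where
  toFun p := ⟨fun q => α ((s q)⁻¹ * p * s ((ψ p)⁻¹ * q)), ψ p⟩
  map_one' := by ext <;> simp [one_left, one_right]
  map_mul' p p' := by
    ext q
    · show α _ = α _ * α _
      rw [← map_mul, map_mul ψ, mul_inv_rev, mul_assoc (ψ p')⁻¹]
      group
    · simp [mul_right]

@[simp] theorem kaloujnineKrasner_left (α : P →* G) (ψ : P →* Q) (s : Q → P) (p : P) (q : Q) :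
    (kaloujnineKrasner α ψ s p).left q = α ((s q)⁻¹ * p * s ((ψ p)⁻¹ * q)) := rfl

@[simp] theorem kaloujnineKrasner_right (α : P →* G) (ψ : P →* Q) (s : Q → P) (p : P) :
    (kaloujnineKrasner α ψ s p).right = ψ p := rfl

theorem continuous_kaloujnineKrasner [TopologicalSpace P] [IsTopologicalGroup P] [Finite Q]
    {α : P →* G} {ψ : P →* Q} (hα : Continuous[_, ⊥] α) (hψ : Continuous[_, ⊥] ψ) (s : Q → P) :
    Continuous[_, ⊥] (kaloujnineKrasner α ψ s) := by
  refine MonoidHom.continuous_bot_of_isOpen_ker _ (Subgroup.isOpen_mono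
    (H₁ := ψ.ker ⊓ ⨅ q, α.ker.comap (MulAut.conj (s q)⁻¹).toMonoidHom) ?_ ?_)
  · intro p hp
    simp only [Subgroup.mem_inf, Subgroup.mem_iInf, Subgroup.mem_comap, MonoidHom.mem_ker,
      MulEquiv.coe_toMonoidHom, MulAut.conj_apply, inv_inv] at hp
    ext q
    · simp [hp.1, hp.2 q]
    · simp [hp.1]
  · rw [Subgroup.coe_inf, Subgroup.coe_iInf]
    refine (isOpen_preimage_of_continuous_bot hψ {1}).inter (isOpen_iInter_of_finite fun q => ?_)
    exact (isOpen_preimage_of_continuous_bot hα {1}).preimage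
      (show Continuous fun p => (s q)⁻¹ * p * (s q)⁻¹⁻¹ by fun_prop)

theorem comp_kerEval_subgroupComap {Γ : Type*} [Group Γ] {α : P →* G} {f : Γ →* G}
    {ρ : P →* Γ ≀ᵣ Q} {s : Q → P} (hs : s 1 = 1)
    (hρ : (mapLeft f).comp ρ = kaloujnineKrasner α (rightHom.comp ρ) s) :
    f.comp ((kerEval 1).comp (ρ.subgroupComap rightHom.ker)) =
      α.comp (rightHom.ker.comap ρ).subtype := by
  ext ⟨p, hp⟩
  have hp : (ρ p).right = 1 := hp
  show f ((ρ p).left 1) = α p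
  simpa [hs, hp] using congr(($hρ p).left 1)

end RegularWreathProduct

open RegularWreathProduct

section PowSection

variable {P : Type*} [Group P] {n : ℕ}

def powSection (y : P) (q : Multiplicative (ZMod n)) : P := y ^ q.toAdd.val

theorem powSection_one [NeZero n] (y : P) : powSection y (1 : Multiplicative (ZMod n)) = 1 := by
  simp [powSection]

theorem powSection_ofAdd_one_pow (y : P) {j : ℕ} (hj : j < n) :
    powSection y (.ofAdd (1 : ZMod n) ^ j) = y ^ j := by
  simp [powSection, ← ofAdd_nsmul, ZMod.val_natCast, Nat.mod_eq_of_lt hj]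

theorem kaloujnineKrasner_powSection_left_eq_one [Fact (1 < n)] {G : Type*} [Group G] (α : P →* G)
    {ψ : P →* Multiplicative (ZMod n)} {y : P} (hψ : ψ y = .ofAdd 1) {q : Multiplicative (ZMod n)}
    (hq : q ≠ 1) : (kaloujnineKrasner α ψ (powSection y) y).left q = 1 := by
  have hval : (((Multiplicative.ofAdd 1)⁻¹ * q).toAdd).val + 1 = q.toAdd.val := by
    rw [toAdd_mul, toAdd_inv, toAdd_ofAdd, neg_add_eq_sub]
    exact ZMod.val_sub_one_add_one hq
  rw [kaloujnineKrasner_left, hψ, powSection, powSection, mul_assoc, ← pow_succ', hval,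
    inv_mul_cancel, map_one]

end PowSection

theorem exists_open_solution_of_wreath {P G Γ : Type*} [Group P] [TopologicalSpace P]
    [IsTopologicalGroup P] [Group G] [Group Γ] {n : ℕ} [Fact (1 < n)] {α : P →* G}
    (hα : Function.Surjective α) {f : Γ →* G} {ρ : P →* Γ ≀ᵣ Multiplicative (ZMod n)}
    (hρ : Continuous[_, ⊥] ρ) {y x : P} {c : Γ} (hρy : ρ y = ⟨Pi.mulSingle 1 c, .ofAdd 1⟩)
    (hαy : α y ^ (n - 1) = 1)
    (hρκ : (mapLeft f).comp ρ = kaloujnineKrasner α (rightHom.comp ρ) (powSection y))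
    (hx : (ρ x).right = 1) (hfib : ∀ z, f z = α x → ∃ j < n, (ρ x).left (.ofAdd 1 ^ j) = z) :
    ∃ H : Subgroup P, IsOpen (H : Set P) ∧ Function.Surjective (α.comp H.subtype) ∧
      ∃ γ : H →* Γ, Continuous[_, ⊥] γ ∧ Function.Surjective γ ∧ f.comp γ = α.comp H.subtype := by
  set H := rightHom.ker.comap ρ
  set γ := (kerEval 1).comp (ρ.subgroupComap rightHom.ker)
  have hcomm : f.comp γ = α.comp H.subtype := comp_kerEval_subgroupComap (powSection_one _) hρκ
  have hαH : Function.Surjective (α.comp H.subtype) := by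
    have hy : (rightHom.comp ρ) y = .ofAdd 1 := by simp [hρy, rightHom_eq_right]
    show Function.Surjective (α.comp (rightHom.ker.comap ρ).subtype)
    exact (MonoidHom.comap_ker rightHom ρ).symm ▸
      MonoidHom.surjective_comp_ker_subtype_of_pow_eq_one hα hy hαy
  have hH : IsOpen (H : Set P) := isOpen_preimage_of_continuous_bot hρ {w | rightHom w = 1}
  have hγ : Continuous[_, ⊥] γ :=
    @Continuous.comp H P Γ _ _ ⊥ _ _ (hρ.bot_comp fun w => w.left 1) continuous_subtype_val
  refine ⟨H, hH, hαH, γ, hγ, MonoidHom.surjective_of_fiber_subset_range (hcomm ▸ hαH)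
    (g := α x) fun z hz => ?_, hcomm⟩
  obtain ⟨j, hj, rfl⟩ := hfib z hz
  have hmem : (y ^ j)⁻¹ * x * y ^ j ∈ H := by
    show rightHom (ρ _) = 1
    simp [rightHom_eq_right, hx]
  refine ⟨⟨_, hmem⟩, ?_⟩
  show (ρ ((y ^ j)⁻¹ * x * y ^ j)).left 1 = _
  rw [map_mul, map_mul, map_inv, map_pow, hρy]
  exact conj_pow_left_one c _ hx (by simpa [orderOf_ofAdd_eq_addOrderOf] using hj)

def IsFreeProfiniteBasis {m : ℕ} {P : Type*} [Group P] [TopologicalSpace P] (ι : Fin m → P) :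
    Prop :=
  ∀ (G : Type) [Group G] [Finite G] (g : Fin m → G),
    ∃! φ : {f : P →* G // Continuous[_, ⊥] f}, ∀ i, (φ : P →* G) (ι i) = g i

namespace IsFreeProfiniteBasis

variable {m : ℕ} {P : Type*} [Group P] [TopologicalSpace P] {ι : Fin m → P}

theorem exists_hom (hι : IsFreeProfiniteBasis ι) {M : Type} [Group M] [Finite M]
    (g : Fin m → M) : ∃ φ : P →* M, Continuous[_, ⊥] φ ∧ ∀ i, φ (ι i) = g i :=
  let ⟨φ, hφ, _⟩ := hι M g
  ⟨φ, φ.2, hφ⟩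

theorem hom_ext (hι : IsFreeProfiniteBasis ι) {M : Type} [Group M] [Finite M] {φ₁ φ₂ : P →* M}
    (h₁ : Continuous[_, ⊥] φ₁) (h₂ : Continuous[_, ⊥] φ₂) (h : ∀ i, φ₁ (ι i) = φ₂ (ι i)) :
    φ₁ = φ₂ :=
  congrArg Subtype.val ((hι M _).unique (y₁ := ⟨φ₁, h₁⟩) (y₂ := ⟨φ₂, h₂⟩) h fun _ => rfl)

theorem range_eq_closure (hι : IsFreeProfiniteBasis ι) {Q : Type*} [Group Q] [Finite Q]
    {φ : P →* Q} (hφ : Continuous[_, ⊥] φ) : φ.range = Subgroup.closure (Set.range (φ ∘ ι)) := by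
  refine le_antisymm ?_ ((Subgroup.closure_le _).mpr (Set.range_comp_subset_range ι φ))
  rintro _ ⟨p, rfl⟩
  by_contra hp
  obtain ⟨ψ₁, ψ₂, hK, hne⟩ := Subgroup.exists_monoidHom_eqOn_ne hp
  let e := (Finite.equivFin (Q ⊕ Q)).permCongrHom.toMonoidHom
  have key : (e.comp ψ₁).comp φ = (e.comp ψ₂).comp φ :=
    hι.hom_ext (hφ.bot_comp (e.comp ψ₁)) (hφ.bot_comp (e.comp ψ₂)) fun i =>
      congrArg e (hK _ (Subgroup.subset_closure ⟨i, rfl⟩))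
  exact hne ((Finite.equivFin (Q ⊕ Q)).permCongrHom.injective congr($key p))

section TopologicalGroup

variable [IsTopologicalGroup P]

theorem isCyclic_quotient [CompactSpace P] (hι : IsFreeProfiniteBasis ι)
    (hm : m ≤ 1) {N : Subgroup P} [N.Normal] (hN : IsOpen (N : Set P)) : IsCyclic (P ⧸ N) := by
  have := N.quotient_finite_of_isOpen hN
  have hrange := hι.range_eq_closure
    ((QuotientGroup.mk' N).continuous_bot_of_isOpen_ker (by rwa [QuotientGroup.ker_mk']))
  rw [(QuotientGroup.mk' N).range_eq_top_of_surjective (QuotientGroup.mk'_surjective N)] at hrange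
  have : Subsingleton (Fin m) := Fin.subsingleton_iff_le_one.mpr hm
  obtain ⟨g, hg⟩ : ∃ g, Set.range (QuotientGroup.mk' N ∘ ι) ⊆ {g} := by
    rcases (Set.subsingleton_range (QuotientGroup.mk' N ∘ ι)).eq_empty_or_singleton
      with h | ⟨g, h⟩
    exacts [⟨1, h ▸ Set.empty_subset _⟩, ⟨g, h.subset⟩]
  refine ⟨g, fun x => ?_⟩
  rw [← Subgroup.mem_zpowers_iff, Subgroup.zpowers_eq_closure]
  exact Subgroup.closure_mono hg (hrange ▸ Subgroup.mem_top x)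

theorem exists_wreath_lift (hι : IsFreeProfiniteBasis ι) {G Γ Q : Type} [Group G] [Group Γ]
    [Group Q] [Finite G] [Finite Γ] [Finite Q] [DecidableEq Q] {α : P →* G}
    (hα : Continuous[_, ⊥] α) {f : Γ →* G} (hf : Function.Surjective f) {ψ : P →* Q}
    (hψ : Continuous[_, ⊥] ψ) {s : Q → P} {i₀ i₁ : Fin m} (hi : i₀ ≠ i₁)
    (hy : ∀ q ≠ 1, (kaloujnineKrasner α ψ s (ι i₁)).left q = 1) {e : Γ → Q}
    (he : Function.Injective e) (hx : ∀ z, (kaloujnineKrasner α ψ s (ι i₀)).left (e z) = α (ι i₀)) :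
    ∃ ρ : P →* Γ ≀ᵣ Q, Continuous[_, ⊥] ρ ∧ (mapLeft f).comp ρ = kaloujnineKrasner α ψ s ∧
      (∃ c, ρ (ι i₁) = ⟨Pi.mulSingle 1 c, ψ (ι i₁)⟩) ∧
      ∀ z, f z = α (ι i₀) → (ρ (ι i₀)).left (e z) = z := by
  set κ := kaloujnineKrasner α ψ s
  obtain ⟨w, hw, hwe⟩ := hf.exists_lift_eq_on_fiber (κ (ι i₀)).left he hx
  let c := Function.surjInv hf ((κ (ι i₁)).left 1)
  let W : Fin m → Q → Γ := fun k =>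
    if k = i₁ then Pi.mulSingle 1 c else if k = i₀ then w else Function.surjInv hf ∘ (κ (ι k)).left
  have hW : ∀ k q, f (W k q) = (κ (ι k)).left q := by
    intro k q
    by_cases hk₁ : k = i₁
    · subst hk₁
      by_cases hq : q = 1
      · simp [W, hq, c, Function.surjInv_eq hf]
      · simp [W, hq, hy q hq]
    by_cases hk₀ : k = i₀
    · subst hk₀
      simp [W, hk₁, hw]
    · simp [W, hk₁, hk₀, Function.surjInv_eq hf]
  obtain ⟨ρ, hρ, hρι⟩ := hι.exists_hom fun k => (⟨W k, ψ (ι k)⟩ : Γ ≀ᵣ Q)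
  refine ⟨ρ, hρ, ?_, ⟨c, by simp [hρι, W]⟩, fun z hz => by simp [hρι, W, hi, hwe z hz]⟩
  refine hι.hom_ext (hρ.bot_comp (mapLeft f)) (continuous_kaloujnineKrasner hα hψ s) fun k => ?_
  ext q <;> simp [hρι, hW, κ]

theorem isAlmostOmegaFree (hι : IsFreeProfiniteBasis ι) (hm : 1 < m) : IsAlmostOmegaFree P := by
  intro G Γ _ _ _ _ α f hα hαs hfs
  classical
  let i₀ : Fin m := ⟨0, by omega⟩
  let i₁ : Fin m := ⟨1, hm⟩
  have hi : i₀ ≠ i₁ := by simp [i₀, i₁, Fin.ext_iff]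
  set r := Nat.card G
  -- `α` kills `y ^ (n - 1)`, and the `|Γ|` distinct positions `t ^ (r * i)` are invisible to `α`.
  set n := r * Nat.card Γ + 1
  have : Fact (1 < n) := ⟨Nat.lt_add_of_pos_left (Nat.mul_pos Nat.card_pos Nat.card_pos)⟩
  let t : Multiplicative (ZMod n) := .ofAdd 1
  have ht : orderOf t = n := by simp [t, orderOf_ofAdd_eq_addOrderOf]
  obtain ⟨ψ, hψ, hψι⟩ := hι.exists_hom fun k => if k = i₁ then t else 1
  have hψy : ψ (ι i₁) = t := by simp [hψι]
  have hψx : ψ (ι i₀) = 1 := by simp [hψι, hi]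
  let idx := Finite.equivFin Γ
  have hlt : ∀ z, r * idx z < n := fun z => by
    have := Nat.mul_le_mul_left r (idx z).isLt.le
    omega
  let e : Γ → Multiplicative (ZMod n) := fun z => t ^ (r * idx z)
  have he : Function.Injective e := fun z z' h => by
    have := pow_injOn_Iio_orderOf (x := t) (by rw [Set.mem_Iio, ht]; exact hlt z)
      (by rw [Set.mem_Iio, ht]; exact hlt z') h
    exact idx.injective (Fin.ext (Nat.eq_of_mul_eq_mul_left Nat.card_pos this))
  have hse : ∀ z, powSection (ι i₁) (e z) = ι i₁ ^ (r * idx z) :=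
    fun z => powSection_ofAdd_one_pow _ (hlt z)
  obtain ⟨ρ, hρ, hρκ, ⟨c, hρy⟩, hρx⟩ := hι.exists_wreath_lift hα hfs hψ hi
    (fun q hq => kaloujnineKrasner_powSection_left_eq_one α hψy hq) he fun z => by
      rw [kaloujnineKrasner_left, hψx, inv_one, one_mul, hse, map_mul, map_mul, map_inv, map_pow,
        pow_mul, pow_card_eq_one', one_pow, inv_one, one_mul, mul_one]
  have hψρ : rightHom.comp ρ = ψ := by ext p; exact congr(($hρκ p).right)
  refine exists_open_solution_of_wreath hαs hρ (hρy.trans (by rw [hψy])) ?_ (hψρ ▸ hρκ)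
    ((DFunLike.congr_fun hψρ _).trans hψx) fun z hz => ⟨r * idx z, hlt z, hρx z hz⟩
  rw [Nat.add_sub_cancel, pow_mul, pow_card_eq_one', one_pow]

end TopologicalGroup

end IsFreeProfiniteBasis

theorem not_isAlmostOmegaFree_of_isCyclic_quotient {P : Type*} [Group P] [TopologicalSpace P]
    [IsTopologicalGroup P] [CompactSpace P] [TotallyDisconnectedSpace P]
    (hP : ∀ (N : Subgroup P) [N.Normal], IsOpen (N : Set P) → IsCyclic (P ⧸ N)) :
    ¬ IsAlmostOmegaFree P := by
  intro hfree
  obtain ⟨H, hH, -, γ, hγ, hγs, -⟩ := hfree PUnit (Equiv.Perm (Fin 3)) 1 1 continuous_const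
    (fun _ => ⟨1, rfl⟩) (fun _ => ⟨1, rfl⟩)
  have hker : IsOpen ((γ.ker.map H.subtype : Subgroup P) : Set P) :=
    hH.isOpenMap_subtype_val _ (isOpen_preimage_of_continuous_bot hγ {1})
  obtain ⟨⟨⟨N, hNo⟩, hNn⟩, hN⟩ := ProfiniteGrp.exist_openNormalSubgroup_sub_open_nhds_of_one hker
    (γ.ker.map H.subtype).one_mem
  have := hP N hNo
  have : IsCyclic (Equiv.Perm (Fin 3)) :=
    ((QuotientGroup.mk' N).comp H.subtype).isCyclic_of_ker_le hγs fun h hh => by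
      obtain ⟨h', hh', he⟩ := hN ((QuotientGroup.eq_one_iff _).mp hh)
      rwa [Subtype.ext he] at hh'
  exact absurd (this.isMulCommutative.is_comm.comm (Equiv.swap 0 1) (Equiv.swap 1 2))
    (by decide)

/-- **Corollary 4.3 (Harbater–Stevenson).**  A free profinite group of finite rank `m`
is almost ω-free if and only if `m > 1`. -/
theorem stmt12 (m : ℕ) (P : Type v) [Group P] [TopologicalSpace P]
    (h : IsFreeProfiniteOfRank m P) :
    IsAlmostOmegaFree P ↔ 1 < m := by
  obtain ⟨_, _, -, _, ι, hι⟩ := h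
  replace hι : IsFreeProfiniteBasis ι := hι
  refine ⟨fun hfree => ?_, hι.isAlmostOmegaFree⟩
  by_contra! hm
  exact not_isAlmostOmegaFree_of_isCyclic_quotient (fun _ _ hN => hι.isCyclic_quotient hm hN) hfree
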